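/- arXiv:2510.18151 — 3 statements merged into one kernel-verified Lean document; each statement's English description precedes it below -/
import Mathlib

section
/- Let k be a field and j a natural number. Consider the commutative monoid M = kˣ × (Fin j → ℕ) (the direct product of the unit group of k with the free commutative monoid on j generators), and regard the monoid algebra MonoidAlgebra k M as an algebra over the group algebra MonoidAlgebra k kˣ via the monoid homomorphism u ↦ (u, 0). Regard k as a MonoidAlgebra k kˣ-algebra via the k-algebra homomorphism MonoidAlgebra k kˣ → k induced by the inclusion of monoids kˣ → k. Then there is a k-algebra isomorphism (MonoidAlgebra k M) ⊗[MonoidAlgebra k kˣ] k ≅ MvPolynomial (Fin j) k which sends the class of the basis element of (u, n) ∈ M to u • ∏_{i} Xᵢ^{n i}. -/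
/-!
The assignment `(u, n) ↦ u • ∏ i, X i ^ n i` is a monoid hom `M → k[X]`, hence a `k`-algebra map
`k[M] → k[X]`. On `k[kˣ]` it is the augmentation `u ↦ u`, so it factors through
`k[M] ⊗[k[kˣ]] k`. Conversely `X i ↦ (1, δᵢ) ⊗ 1` defines a map back. In the tensor product
`(u, n) ⊗ 1 = (1, n) ⊗ u = u • ((1, n) ⊗ 1)`, which makes the two maps mutually inverse on the
elements `a ⊗ 1`; since `k[kˣ] → k` is surjective, these are all elements.
-/

open scoped TensorProduct

namespace Stmt0

variable (k : Type*) [Field k] (j : ℕ)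

/-- The commutative monoid `M = kˣ × ℕ^j` (with `ℕ^j` written multiplicatively). -/
abbrev M : Type _ := kˣ × Multiplicative (Fin j → ℕ)

/-- The inclusion of monoids `kˣ → M`, `u ↦ (u, 0)`. -/
def ι : kˣ →* M k j := MonoidHom.inl _ _

/-- A type synonym for the monoid algebra `MonoidAlgebra k M` (used to pin down the
`MonoidAlgebra k kˣ`-algebra structure coming from `u ↦ (u, 0)`). -/
def MA : Type _ := MonoidAlgebra k (M k j)

noncomputable instance : CommSemiring (MA k j) :=
  inferInstanceAs (CommSemiring (MonoidAlgebra k (M k j)))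

noncomputable instance : Algebra k (MA k j) :=
  inferInstanceAs (Algebra k (MonoidAlgebra k (M k j)))

/-- `MonoidAlgebra k M` is an algebra over `MonoidAlgebra k kˣ` via the monoid homomorphism
`u ↦ (u, 0)`. -/
noncomputable instance : Algebra (MonoidAlgebra k kˣ) (MA k j) :=
  ((MonoidAlgebra.mapDomainAlgHom k k (ι k j)).toRingHom :
    MonoidAlgebra k kˣ →+* MA k j).toAlgebra

/-- `k` is an algebra over `MonoidAlgebra k kˣ` via the `k`-algebra homomorphism
`MonoidAlgebra k kˣ → k` induced by the inclusion of monoids `kˣ → k`. -/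
noncomputable instance : Algebra (MonoidAlgebra k kˣ) k :=
  (((MonoidAlgebra.lift k k kˣ) (Units.coeHom k)).toRingHom).toAlgebra

instance : SMulCommClass (MonoidAlgebra k kˣ) k (MA k j) :=
  ⟨fun t c a => by
    simp only [Algebra.smul_def]
    ring⟩

open MvPolynomial

theorem _root_.Multiplicative.prod_ofAdd_single_pow {ι : Type*} [Fintype ι] [DecidableEq ι]
    (n : Multiplicative (ι → ℕ)) :
    ∏ i, Multiplicative.ofAdd (Pi.single i 1 : ι → ℕ) ^ n.toAdd i = n := by
  apply Multiplicative.toAdd.injective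
  ext l
  simp [toAdd_prod, Finset.sum_apply, Pi.single_apply]

noncomputable def _root_.MvPolynomial.prodXPowHom (R ι : Type*) [CommSemiring R] [Fintype ι] :
    Multiplicative (ι → ℕ) →* MvPolynomial ι R where
  toFun n := ∏ i, X i ^ n.toAdd i
  map_one' := by simp
  map_mul' m n := by simp [pow_add, Finset.prod_mul_distrib]

theorem _root_.MvPolynomial.prodXPowHom_ofAdd_single {R ι : Type*} [CommSemiring R] [Fintype ι]
    [DecidableEq ι] (i : ι) :
    prodXPowHom R ι (.ofAdd (Pi.single i 1)) = X i := by
  simp [prodXPowHom, Pi.single_apply]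

-- These two towers let scalars from `k` pass through `⊗[MonoidAlgebra k kˣ]`.
instance : IsScalarTower k (MonoidAlgebra k kˣ) (MA k j) :=
  IsScalarTower.of_algebraMap_eq fun c =>
    ((MonoidAlgebra.mapDomainAlgHom k k (ι k j)).commutes c).symm

instance : IsScalarTower k (MonoidAlgebra k kˣ) k :=
  IsScalarTower.of_algebraMap_eq fun c =>
    ((MonoidAlgebra.lift k k kˣ (Units.coeHom k)).commutes c).symm

noncomputable instance : Algebra (MonoidAlgebra k kˣ) (MvPolynomial (Fin j) k) :=
  ((algebraMap k _).comp (algebraMap (MonoidAlgebra k kˣ) k)).toAlgebra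

instance : IsScalarTower (MonoidAlgebra k kˣ) k (MvPolynomial (Fin j) k) :=
  IsScalarTower.of_algebraMap_eq fun _ => rfl

noncomputable def monomialHom : M k j →* MvPolynomial (Fin j) k :=
  (C.toMonoidHom.comp (Units.coeHom k)).coprod (prodXPowHom k (Fin j))

theorem monomialHom_apply (u : kˣ) (n : Multiplicative (Fin j → ℕ)) :
    monomialHom k j (u, n) = (u : k) • prodXPowHom k (Fin j) n := by
  simp [monomialHom, smul_eq_C_mul]

-- Typed in `MA k j`, so that `⊗ₜ[MonoidAlgebra k kˣ]` uses the structure through `ι` and not the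
-- coefficientwise one that Mathlib puts on `MonoidAlgebra k (M k j)`.
noncomputable def MA.of : M k j →* MA k j := MonoidAlgebra.of k (M k j)

noncomputable def evalMonomial : MonoidAlgebra k (M k j) →ₐ[k] MvPolynomial (Fin j) k :=
  MonoidAlgebra.lift k _ (M k j) (monomialHom k j)

theorem evalMonomial_of (m : M k j) :
    evalMonomial k j (MA.of k j m) = monomialHom k j m :=
  MonoidAlgebra.lift_of _ m

theorem evalMonomial_comp_mapDomainAlgHom :
    (evalMonomial k j).comp (MonoidAlgebra.mapDomainAlgHom k k (ι k j)) =
      (Algebra.ofId k _).comp (MonoidAlgebra.lift k k kˣ (Units.coeHom k)) :=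
  MonoidAlgebra.algHom_ext (fun u => by
    simp [evalMonomial, ι, monomialHom_apply, Algebra.ofId_apply, algebraMap_eq, smul_eq_C_mul])
    (Subsingleton.elim _ _)

noncomputable def toMvPolynomial : MA k j ⊗[MonoidAlgebra k kˣ] k →ₐ[k] MvPolynomial (Fin j) k :=
  { Algebra.TensorProduct.productMap
      ({ (evalMonomial k j).toRingHom with
        commutes' := fun r => congr($(evalMonomial_comp_mapDomainAlgHom k j) r) } :
        MA k j →ₐ[MonoidAlgebra k kˣ] MvPolynomial (Fin j) k)
      (IsScalarTower.toAlgHom _ k _) with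
    commutes' := fun c => by
      rw [Algebra.TensorProduct.algebraMap_apply]
      exact (mul_one _).trans ((evalMonomial k j).commutes c) }

theorem toMvPolynomial_tmul_one (x : MA k j) :
    toMvPolynomial k j (x ⊗ₜ 1) = evalMonomial k j x :=
  mul_one _

theorem algebraMap_of (u : kˣ) :
    algebraMap (MonoidAlgebra k kˣ) (MA k j) (MonoidAlgebra.of k kˣ u) = MA.of k j (u, 1) := by
  change MonoidAlgebra.mapDomainAlgHom k k (ι k j) (MonoidAlgebra.of k kˣ u) = _
  simp [ι]
  rfl

theorem MA.of_tmul_one (u : kˣ) (n : Multiplicative (Fin j → ℕ)) :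
    MA.of k j (u, n) ⊗ₜ[MonoidAlgebra k kˣ] (1 : k) =
      (u : k) • (MA.of k j (1, n) ⊗ₜ[MonoidAlgebra k kˣ] (1 : k)) := by
  have hsplit : MA.of k j (u, n) = MonoidAlgebra.of k kˣ u • MA.of k j (1, n) := by
    rw [Algebra.smul_def, algebraMap_of, ← map_mul, Prod.mk_mul_mk, one_mul, mul_one]
  have hu : MonoidAlgebra.of k kˣ u • (1 : k) = (u : k) • (1 : k) := by
    rw [Algebra.smul_def, mul_one, smul_eq_mul, mul_one]
    exact MonoidAlgebra.lift_of _ u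
  calc MA.of k j (u, n) ⊗ₜ[MonoidAlgebra k kˣ] (1 : k)
      = MA.of k j (1, n) ⊗ₜ (MonoidAlgebra.of k kˣ u • (1 : k)) := by
        rw [hsplit]
        exact TensorProduct.smul_tmul (R := MonoidAlgebra k kˣ) (M := MA k j) (N := k)
          (MonoidAlgebra.of k kˣ u) _ _
    _ = MA.of k j (1, n) ⊗ₜ ((u : k) • (1 : k)) := by rw [hu]
    _ = (u : k) • (MA.of k j (1, n) ⊗ₜ[MonoidAlgebra k kˣ] (1 : k)) :=
        (TensorProduct.smul_tmul (R := MonoidAlgebra k kˣ) (M := MA k j) (N := k) _ _ _).symm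

noncomputable def ofMvPolynomial : MvPolynomial (Fin j) k →ₐ[k] MA k j ⊗[MonoidAlgebra k kˣ] k :=
  aeval fun i => MA.of k j (1, .ofAdd (Pi.single i 1)) ⊗ₜ 1

theorem ofMvPolynomial_prodXPowHom (n : Multiplicative (Fin j → ℕ)) :
    ofMvPolynomial k j (prodXPowHom k (Fin j) n) = MA.of k j (1, n) ⊗ₜ 1 := by
  let incl : MA k j →ₐ[k] MA k j ⊗[MonoidAlgebra k kˣ] k := Algebra.TensorProduct.includeLeft
  change ofMvPolynomial k j (∏ i, X i ^ n.toAdd i) = incl (MA.of k j (MonoidHom.inr _ _ n))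
  simp only [map_prod, map_pow, ofMvPolynomial, aeval_X]
  change ∏ i, incl (MA.of k j (MonoidHom.inr _ _ (.ofAdd (Pi.single i 1)))) ^ n.toAdd i = _
  simp only [← map_pow, ← map_prod, Multiplicative.prod_ofAdd_single_pow]

theorem ofMvPolynomial_evalMonomial (x : MA k j) :
    ofMvPolynomial k j (evalMonomial k j x) = x ⊗ₜ 1 := by
  suffices (ofMvPolynomial k j).comp (evalMonomial k j) =
      (Algebra.TensorProduct.includeLeft : MA k j →ₐ[k] _) from congr($this x)
  refine MonoidAlgebra.algHom_ext (fun ⟨u, n⟩ => ?_) (Subsingleton.elim _ _)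
  change ofMvPolynomial k j (evalMonomial k j (MA.of k j (u, n))) = MA.of k j (u, n) ⊗ₜ 1
  rw [evalMonomial_of, monomialHom_apply, map_smul, ofMvPolynomial_prodXPowHom,
    MA.of_tmul_one k j u n]

theorem toMvPolynomial_comp_ofMvPolynomial :
    (toMvPolynomial k j).comp (ofMvPolynomial k j) = AlgHom.id k _ := by
  ext i
  rw [AlgHom.comp_apply, ofMvPolynomial, aeval_X, toMvPolynomial_tmul_one, evalMonomial_of,
    monomialHom_apply, Units.val_one, one_smul, prodXPowHom_ofAdd_single, AlgHom.id_apply]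

theorem ofMvPolynomial_comp_toMvPolynomial :
    (ofMvPolynomial k j).comp (toMvPolynomial k j) = AlgHom.id k _ := by
  have hsurj : Function.Surjective (algebraMap (MonoidAlgebra k kˣ) k) := fun c =>
    ⟨algebraMap k _ c, (IsScalarTower.algebraMap_apply k (MonoidAlgebra k kˣ) k c).symm⟩
  ext x
  obtain ⟨a, rfl⟩ := Algebra.TensorProduct.includeLeft_surjective k (MA k j) hsurj x
  exact (congr_arg _ (toMvPolynomial_tmul_one k j a)).trans (ofMvPolynomial_evalMonomial k j a)

noncomputable def tensorEquiv : MA k j ⊗[MonoidAlgebra k kˣ] k ≃ₐ[k] MvPolynomial (Fin j) k :=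
  .ofAlgHom (toMvPolynomial k j) (ofMvPolynomial k j) (toMvPolynomial_comp_ofMvPolynomial k j)
    (ofMvPolynomial_comp_toMvPolynomial k j)

theorem stmt0 :
    ∃ e : (MA k j) ⊗[MonoidAlgebra k kˣ] k ≃ₐ[k] MvPolynomial (Fin j) k,
      ∀ (u : kˣ) (n : Fin j → ℕ),
        e ((MonoidAlgebra.single ((u, Multiplicative.ofAdd n) : M k j) (1 : k) : MA k j)
            ⊗ₜ[MonoidAlgebra k kˣ] (1 : k)) =
          (u : k) • ∏ i, (MvPolynomial.X i : MvPolynomial (Fin j) k) ^ n i := by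
  refine ⟨tensorEquiv k j, fun u n => ?_⟩
  change toMvPolynomial k j (MA.of k j (u, .ofAdd n) ⊗ₜ 1) = _
  rw [toMvPolynomial_tmul_one, evalMonomial_of, monomialHom_apply]
  rfl

end Stmt0
end

section
/- Let k be a field and j a natural number, and consider the commutative group G = kˣ × (Fin j → ℤ) with the group homomorphism ι : kˣ →* G, u ↦ (u, 0). Then the set of k-algebra homomorphisms f : MonoidAlgebra k G →ₐ[k] k satisfying f(single (u, 0) 1) = u for every u ∈ kˣ is in bijection with Fin j → kˣ, the bijection sending f to the tuple (f(single (1, eᵢ) 1))_{i}, where eᵢ ∈ (Fin j → ℤ) is the i-th standard basis vector; in particular each value f(single (1, eᵢ) 1) is a nonzero element of k. -/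
/-!
A `k`-algebra map `k[G] → k` is the same as a character `G →* kˣ` (every element of a group is
invertible). A character of `kˣ × ℤ^j` that is the identity on `kˣ` is `(u, m) ↦ u * χ m` for a
unique character `χ` of `ℤ^j`, and `χ` is determined freely by its values on the standard basis.
-/

open MonoidAlgebra

namespace MonoidAlgebra

variable (k G A : Type*) [CommSemiring k] [Group G] [CommSemiring A] [Algebra k A]

noncomputable def liftUnits : (G →* Aˣ) ≃ (MonoidAlgebra k G →ₐ[k] A) :=
  MonoidHom.toHomUnitsMulEquiv.toEquiv.symm.trans (lift k A G)

variable {k G A}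

@[simp]
theorem coe_liftUnits_symm_apply (f : MonoidAlgebra k G →ₐ[k] A) (g : G) :
    ((liftUnits k G A).symm f g : A) = f (single g 1) := rfl

end MonoidAlgebra

theorem Multiplicative.ofAdd_eq_prod_zpow {ι : Type*} [Fintype ι] [DecidableEq ι] (m : ι → ℤ) :
    ofAdd m = ∏ i, ofAdd (Pi.single i (1 : ℤ)) ^ m i := by
  simp_rw [← ofAdd_zsmul, ← ofAdd_sum]
  congr 1
  ext i
  simp [Finset.sum_apply, Pi.single_apply]

namespace MonoidHom

section CoprodLeft

variable {M N P : Type*} [MulOneClass M] [MulOneClass N] [CommMonoid P]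

def coprodLeftEquiv (σ : M →* P) : {ψ : M × N →* P // ∀ m, ψ (m, 1) = σ m} ≃ (N →* P) where
  toFun ψ := ψ.1.comp (inr M N)
  invFun χ := ⟨σ.coprod χ, by simp⟩
  left_inv := by
    rintro ⟨ψ, hψ⟩
    have hσ : ψ.comp (inl M N) = σ := MonoidHom.ext hψ
    ext1
    simp only
    rw [← hσ, coprod_unique]
  right_inv χ := by ext; simp

@[simp]
theorem coprodLeftEquiv_apply (σ : M →* P) (ψ : {ψ : M × N →* P // ∀ m, ψ (m, 1) = σ m})
    (n : N) : coprodLeftEquiv σ ψ n = ψ.1 (1, n) := rfl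

end CoprodLeft

section PiInt

variable {ι A : Type*} [Fintype ι] [DecidableEq ι] [CommGroup A]

theorem map_ofAdd_pi_int (ψ : Multiplicative (ι → ℤ) →* A) (m : ι → ℤ) :
    ψ (Multiplicative.ofAdd m) =
      ∏ i, ψ (Multiplicative.ofAdd (Pi.single i (1 : ℤ))) ^ m i := by
  rw [Multiplicative.ofAdd_eq_prod_zpow, map_prod]
  simp_rw [map_zpow]

def piIntEquiv : (Multiplicative (ι → ℤ) →* A) ≃ (ι → A) where
  toFun ψ i := ψ (Multiplicative.ofAdd (Pi.single i 1))
  invFun a :=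
    { toFun m := ∏ i, a i ^ Multiplicative.toAdd m i
      map_one' := by simp
      map_mul' m n := by simp [zpow_add, Finset.prod_mul_distrib] }
  left_inv ψ := MonoidHom.ext fun m => (ψ.map_ofAdd_pi_int m.toAdd).symm
  right_inv a := by
    ext i
    simp [Pi.single_apply]

theorem piIntEquiv_apply (ψ : Multiplicative (ι → ℤ) →* A) (i : ι) :
    piIntEquiv ψ i = ψ (Multiplicative.ofAdd (Pi.single i 1)) := rfl

end PiInt

end MonoidHom

theorem stmt2 (k : Type*) [Field k] (j : ℕ) :
    ∃ e : {f : MonoidAlgebra k (kˣ × Multiplicative (Fin j → ℤ)) →ₐ[k] k //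
            ∀ u : kˣ,
              f (MonoidAlgebra.single ((u, 1) : kˣ × Multiplicative (Fin j → ℤ)) (1 : k)) =
                (u : k)} ≃ (Fin j → kˣ),
      (∀ f (i : Fin j),
        ((e f) i : k) =
          f.1 (MonoidAlgebra.single
            ((1, Multiplicative.ofAdd (Pi.single i (1 : ℤ))) : kˣ × Multiplicative (Fin j → ℤ))
            (1 : k))) ∧
      (∀ f : {f : MonoidAlgebra k (kˣ × Multiplicative (Fin j → ℤ)) →ₐ[k] k //
            ∀ u : kˣ,
              f (MonoidAlgebra.single ((u, 1) : kˣ × Multiplicative (Fin j → ℤ)) (1 : k)) =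
                (u : k)},
        ∀ i : Fin j,
        f.1 (MonoidAlgebra.single
          ((1, Multiplicative.ofAdd (Pi.single i (1 : ℤ))) : kˣ × Multiplicative (Fin j → ℤ))
          (1 : k)) ≠ 0) := by
  let G := kˣ × Multiplicative (Fin j → ℤ)
  let e := (Equiv.subtypeEquiv (p := fun f => ∀ u : kˣ, f (single ((u, 1) : G) 1) = (u : k))
      (liftUnits k G k).symm fun _ => forall_congr' fun _ => by
        rw [MonoidHom.id_apply, Units.ext_iff, coe_liftUnits_symm_apply]).trans
    ((MonoidHom.coprodLeftEquiv (MonoidHom.id kˣ)).trans MonoidHom.piIntEquiv)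
  have he : ∀ f i, ((e f) i : k) =
      f.1 (single ((1, Multiplicative.ofAdd (Pi.single i (1 : ℤ))) : G) 1) := fun _ _ => rfl
  exact ⟨e, he, fun f i => he f i ▸ (e f i).ne_zero⟩
end

section
/- Let Q be the quiver with four vertices v₀, v₁, v₂, v₃ and three arrows f : v₀ → v₁, g : v₂ → v₁, h : v₂ → v₃, and let P = Paths Q be the free category on Q (the category denoted ←Δ[3], i.e. • → • ← • → •). Let [2] denote the linearly ordered category on {0, 1, 2} (e.g. Fin 3 with its order), and let F : P ⥤ [2] be the functor determined by F(v₀) = 0, F(v₁) = F(v₂) = 1, F(v₃) = 2, sending f to the morphism 0 ⟶ 1, g to the identity of 1, and h to the morphism 1 ⟶ 2. Then F exhibits [2] as the localization of P at the morphism property generated by {g}; that is, F is a localization functor with respect to W = {g}. -/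
/-!
Statement 3: Let `Q` be the quiver with vertices `v₀, v₁, v₂, v₃` and arrows
`f : v₀ → v₁`, `g : v₂ → v₁`, `h : v₂ → v₃`, and let `P = Paths Q` (the category
`* → * ← * → *`). Let `F : P ⥤ [2]` be the functor with `F v₀ = 0`, `F v₁ = F v₂ = 1`,
`F v₃ = 2`, sending `f` to `0 ⟶ 1`, `g` to `𝟙 1` and `h` to `1 ⟶ 2`. Then `F` exhibits
`[2]` as the localization of `P` at the morphism property generated by `{g}`.
-/

open CategoryTheory

namespace Stmt3

/-- The four vertices. -/
inductive V : Type
  | v0 | v1 | v2 | v3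

/-- The three arrows `f : v₀ → v₁`, `g : v₂ → v₁`, `h : v₂ → v₃`. -/
inductive Arrow : V → V → Type
  | f : Arrow .v0 .v1
  | g : Arrow .v2 .v1
  | h : Arrow .v2 .v3

instance : Quiver V := ⟨Arrow⟩

/-- The prefunctor on the quiver determined by `v₀ ↦ 0`, `v₁, v₂ ↦ 1`, `v₃ ↦ 2`,
`f ↦ (0 ⟶ 1)`, `g ↦ 𝟙 1`, `h ↦ (1 ⟶ 2)`. -/
def φ : V ⥤q Fin 3 where
  obj x := match x with
    | .v0 => 0
    | .v1 => 1
    | .v2 => 1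
    | .v3 => 2
  map e := match e with
    | .f => homOfLE (by decide)
    | .g => 𝟙 (1 : Fin 3)
    | .h => homOfLE (by decide)

/-- The functor `←Δ[3] ⥤ Δ[2]` contracting the middle (backward) morphism. -/
def F : Paths V ⥤ Fin 3 := Paths.lift φ

/-- The morphism of the path category corresponding to the arrow `g`. -/
def gMor : ((Paths.of V).obj V.v2 : Paths V) ⟶ (Paths.of V).obj V.v1 := (Paths.of V).map Arrow.g

/-- The morphism property generated by `{g}`: it holds exactly for the morphism `g`. -/
inductive WRel : ∀ ⦃X Y : Paths V⦄, (X ⟶ Y) → Prop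
  | mk : WRel gMor

/-- The morphism property generated by `{g}`, as a `MorphismProperty`. -/
def W : MorphismProperty (Paths V) := fun _ _ p => WRel p

/-!
Once `g` is inverted, the zigzag `v₀ → v₁ ← v₂ → v₃` becomes the chain `0 → 1 → 2` with
`1 → 2` given by `g⁻¹ ≫ h`; this chain is a functor `Fin 3 ⥤ W.Localization` inverse to the
functor induced by `F`. One composite is the identity because `Fin 3` is thin; for the other,
`W.Q ≅ F ⋙ fin3ToLocalization` (with component `g` at `v₂`, identities elsewhere) lifts along
the localization to `𝟭 ≅ lift F ⋙ fin3ToLocalization`.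
-/

lemma W_isInvertedBy_F : W.IsInvertedBy F := by
  rintro _ _ _ ⟨⟩
  exact ⟨⟨𝟙 (1 : Fin 3), Subsingleton.elim _ _, Subsingleton.elim _ _⟩⟩

def fMor : ((Paths.of V).obj V.v0 : Paths V) ⟶ (Paths.of V).obj V.v1 := (Paths.of V).map Arrow.f

def hMor : ((Paths.of V).obj V.v2 : Paths V) ⟶ (Paths.of V).obj V.v3 := (Paths.of V).map Arrow.h

noncomputable def gIso : W.Q.obj V.v2 ≅ W.Q.obj V.v1 := Localization.isoOfHom W.Q W gMor .mk

noncomputable def fin3ToLocalization : Fin 3 ⥤ W.Localization :=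
  ComposableArrows.mk₂ (W.Q.map fMor) (gIso.inv ≫ W.Q.map hMor)

noncomputable def qIso : W.Q ≅ F ⋙ fin3ToLocalization :=
  Paths.liftNatIso
    (fun | .v0 => Iso.refl _ | .v1 => Iso.refl _ | .v2 => gIso | .v3 => Iso.refl _)
    (fun e => by
      cases e using Arrow.casesOn
      · show W.Q.map fMor ≫ 𝟙 _ = 𝟙 _ ≫ W.Q.map fMor
        simp
      · show W.Q.map gMor ≫ 𝟙 _ = gIso.hom ≫ 𝟙 _
        rfl
      · show W.Q.map hMor ≫ 𝟙 _ = gIso.hom ≫ gIso.inv ≫ W.Q.map hMor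
        exact (Category.comp_id _).trans (gIso.hom_inv_id_assoc _).symm)

lemma fin3ToLocalization_comp_lift :
    fin3ToLocalization ⋙ Localization.Construction.lift F W_isInvertedBy_F = 𝟭 (Fin 3) :=
  CategoryTheory.Functor.ext (fun i => by fin_cases i <;> rfl) (fun _ _ _ => Subsingleton.elim _ _)

noncomputable def localizationEquivFin3 : W.Localization ≌ Fin 3 :=
  .mk (Localization.Construction.lift F W_isInvertedBy_F) fin3ToLocalization
    (Localization.liftNatIso W.Q W W.Q (F ⋙ fin3ToLocalization) _ _ qIso)
    (eqToIso fin3ToLocalization_comp_lift)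

theorem stmt3 : F.IsLocalization W :=
  ⟨W_isInvertedBy_F, localizationEquivFin3.isEquivalence_functor⟩

end Stmt3
end
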